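/- Let τ₀ : ℝ² → (0,∞) and Q₀ : ℝ² → ℂ_I be smooth, and let g : ℝ² → L be a smooth map with |g|² nowhere vanishing, satisfying the g-system: ∂_z g = (∂_z(log √τ₀))·g + (Q₀/√τ₀)·J·ĝ·I and ∂_z̄ g = (√τ₀/4)·J·ĝ·I. Then ∂_z̄ Q₀ = 0 (Q₀ is I-holomorphic) and ∂_z(∂_z̄(log √τ₀)) = −|Q₀|²/τ₀ + τ₀/16. -/

import Mathlib

/-!
`ℍ^ℂ` is modelled as `Quaternion ℂ` (complex coefficients on `1, I, J, K`, central complex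
unit `i = Complex.I`, `I² = J² = K² = −1`, `I*J = K = −J*I`).  Maps on `ℝ²` are taken on
`ℝ × ℝ`; smoothness and the partial derivatives `∂ₓ`, `∂_y` are meant coefficientwise, and
`qdz f = (1/2)(∂ₓ f − I·∂_y f)`, `qdzbar f = (1/2)(∂ₓ f + I·∂_y f)` (left multiplication
by the quaternion `I`).  `cI` embeds `ℂ` as `ℂ_I = ℝ·1 ⊕ ℝ·I ⊂ ℍ^ℂ`.
-/

noncomputable section

/-- The quaternion `I`. -/
def Iq : Quaternion ℂ := ⟨0, 1, 0, 0⟩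

/-- The quaternion `J`. -/
def Jq : Quaternion ℂ := ⟨0, 0, 1, 0⟩

/-- Coefficientwise complex conjugation `â` on the complex quaternions. -/
def qhat (a : Quaternion ℂ) : Quaternion ℂ :=
  ⟨starRingEnd ℂ a.re, starRingEnd ℂ a.imI, starRingEnd ℂ a.imJ, starRingEnd ℂ a.imK⟩

/-- The embedding of `ℂ` onto `ℂ_I = ℝ·1 ⊕ ℝ·I ⊂ ℍ^ℂ`, sending the complex unit to `I`. -/
def cI (w : ℂ) : Quaternion ℂ := ⟨((w.re : ℝ) : ℂ), ((w.im : ℝ) : ℂ), 0, 0⟩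

/-- The coefficientwise directional derivative of an `ℍ^ℂ`-valued map on `ℝ²`. -/
def qpd (v : ℝ × ℝ) (f : ℝ × ℝ → Quaternion ℂ) (p : ℝ × ℝ) : Quaternion ℂ :=
  ⟨fderiv ℝ (fun s => (f s).re) p v, fderiv ℝ (fun s => (f s).imI) p v,
   fderiv ℝ (fun s => (f s).imJ) p v, fderiv ℝ (fun s => (f s).imK) p v⟩

/-- `∂_z f := (1/2)(∂ₓ f − I·∂_y f)`, with `I·` the left multiplication by `I` in `ℍ^ℂ`. -/
def qdz (f : ℝ × ℝ → Quaternion ℂ) (p : ℝ × ℝ) : Quaternion ℂ :=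
  (2 : ℂ)⁻¹ • (qpd (1, 0) f p - Iq * qpd (0, 1) f p)

/-- `∂_z̄ f := (1/2)(∂ₓ f + I·∂_y f)`. -/
def qdzbar (f : ℝ × ℝ → Quaternion ℂ) (p : ℝ × ℝ) : Quaternion ℂ :=
  (2 : ℂ)⁻¹ • (qpd (1, 0) f p + Iq * qpd (0, 1) f p)

/-- Smoothness (coefficientwise) of an `ℍ^ℂ`-valued map on `ℝ²`. -/
def QSmooth (f : ℝ × ℝ → Quaternion ℂ) : Prop :=
  ContDiff ℝ (⊤ : ℕ∞) (fun p => (f p).re) ∧ ContDiff ℝ (⊤ : ℕ∞) (fun p => (f p).imI) ∧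
  ContDiff ℝ (⊤ : ℕ∞) (fun p => (f p).imJ) ∧ ContDiff ℝ (⊤ : ℕ∞) (fun p => (f p).imK)

/-- The real-valued function `r`, regarded as `ℂ_I`-valued (i.e. `ℍ^ℂ`-valued). -/
def rQ (r : ℝ) : Quaternion ℂ := ⟨((r : ℝ) : ℂ), 0, 0, 0⟩

/-- `L := {(1/2)(1+iI)(a+bJ) : a, b ∈ ℂ} ⊂ ℍ^ℂ`. -/
def Lset : Set (Quaternion ℂ) :=
  {g | ∃ a b : ℂ, g = (2 : ℂ)⁻¹ •
    ((⟨1, Complex.I, 0, 0⟩ : Quaternion ℂ) * (⟨a, 0, b, 0⟩ : Quaternion ℂ))}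

/-- For `g = (1/2)(1+iI)(a+bJ) ∈ L` (so that `a = 2·g.re`, `b = 2·g.imJ`), the squared norm
`|g|² := |a|² − |b|²`. -/
def LnormSq (g : Quaternion ℂ) : ℝ :=
  Complex.normSq (2 * g.re) - Complex.normSq (2 * g.imJ)

/-- The `g`-system: `∂_z g = (∂_z log √τ₀)·g + (Q₀/√τ₀)·J·ĝ·I` and
`∂_z̄ g = (√τ₀/4)·J·ĝ·I`, with the `ℂ_I`-valued Weierstrass data `(Q₀, τ₀)`. -/
def GSystem (τ₀ : ℝ × ℝ → ℝ) (Q₀ : ℝ × ℝ → ℂ) (g : ℝ × ℝ → Quaternion ℂ) : Prop :=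
  ∀ p : ℝ × ℝ,
    qdz g p = qdz (fun s => rQ (Real.log (Real.sqrt (τ₀ s)))) p * g p
        + (Real.sqrt (τ₀ p))⁻¹ • (cI (Q₀ p) * (Jq * qhat (g p) * Iq)) ∧
    qdzbar g p = (Real.sqrt (τ₀ p) / 4) • (Jq * qhat (g p) * Iq)

/-!
Write `g = mkL A B = A (1 + iI) + B (J + iK)`. On such quaternions left multiplication by `I` is
multiplication by `-i`, so the quaternionic `∂_z`, `∂_z̄` act on `A`, `B` as the complex Wirtinger
operators `∂/∂z̄`, `∂/∂z` (on `ℂ_I`-valued maps, where `I` is `i`, they are `∂/∂z`, `∂/∂z̄`), and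
`J ĝ I = i · mkL B̄ Ā`. With `u = log √τ₀` the g-system becomes
`∂̄A = ∂̄u · A + i e^{-u} Q̄₀ B̄`, `∂A = (i/4) e^{u} B̄`, and the same with `A` and `B` swapped.
Expanding `∂(∂̄A) = ∂̄(∂A)` by these equations leaves `a A + c B̄ = 0` and, symmetrically,
`a B + c Ā = 0`, where `a = ∂∂̄u + e^{-2u} |Q₀|² - e^{2u}/16` and `c = i e^{-u} conj (∂̄Q₀)`.
Hence `(|a|² + |c|²)(|A|² - |B|²) = 0`, and `|g|² ≠ 0` forces `a = c = 0`: these are the two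
claims.
-/

open Complex ComplexConjugate

theorem eq_zero_of_mul_add_mul_conj {a c x y : ℂ} (h₁ : a * x + c * conj y = 0)
    (h₂ : a * y + c * conj x = 0) (hxy : normSq x ≠ normSq y) : a = 0 ∧ c = 0 := by
  have key : ((normSq a + normSq c) * (normSq x - normSq y) : ℂ) = 0 := by
    simp only [← mul_conj]
    linear_combination conj a * conj x * h₁ - conj a * conj y * h₂ + conj c * x * h₂
      - conj c * y * h₁
  have hsum : normSq a + normSq c = 0 := by
    exact_mod_cast (mul_eq_zero.1 key).resolve_right (sub_ne_zero.2 (by exact_mod_cast hxy))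
  constructor <;> rw [← normSq_eq_zero] <;> linarith [normSq_nonneg a, normSq_nonneg c]

/-- `wirtinger I` and `wirtinger (-I)` are the Wirtinger derivatives `∂/∂z̄` and `∂/∂z`. -/
def wirtinger (c : ℂ) (f : ℝ × ℝ → ℂ) (p : ℝ × ℝ) : ℂ :=
  2⁻¹ * (fderiv ℝ f p (1, 0) + c * fderiv ℝ f p (0, 1))

section Wirtinger
variable {c : ℂ} {f g : ℝ × ℝ → ℂ} {p : ℝ × ℝ}

theorem wirtinger_add (hf : DifferentiableAt ℝ f p) (hg : DifferentiableAt ℝ g p) :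
    wirtinger c (fun x => f x + g x) p = wirtinger c f p + wirtinger c g p := by
  simp only [wirtinger, fderiv_fun_add hf hg, add_apply]; ring

theorem wirtinger_mul (hf : DifferentiableAt ℝ f p) (hg : DifferentiableAt ℝ g p) :
    wirtinger c (fun x => f x * g x) p = wirtinger c f p * g p + f p * wirtinger c g p := by
  simp only [wirtinger, fderiv_fun_mul hf hg, add_apply, smul_apply, smul_eq_mul]; ring

theorem wirtinger_cexp (hf : DifferentiableAt ℝ f p) :
    wirtinger c (fun x => exp (f x)) p = exp (f p) * wirtinger c f p := by
  simp only [wirtinger, (hf.hasFDerivAt.cexp).fderiv, smul_apply, smul_eq_mul]; ring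

@[simp]
theorem wirtinger_const (a : ℂ) : wirtinger c (fun _ => a) p = 0 := by
  simp [wirtinger]

theorem wirtinger_neg : wirtinger c (fun x => -f x) p = -wirtinger c f p := by
  simp only [wirtinger, fderiv_fun_neg, neg_apply]; ring

theorem wirtinger_conj :
    wirtinger c (fun x => conj (f x)) p = conj (wirtinger (conj c) f p) := by
  have h : (fun x => conj (f x)) = conjLIE ∘ f := rfl
  simp only [wirtinger, h, LinearIsometryEquiv.comp_fderiv, map_mul, map_add, map_inv₀,
    map_ofNat, conj_conj]
  rfl

theorem conj_wirtinger_of_forall_conj_eq (hf : ∀ x, conj (f x) = f x) :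
    conj (wirtinger c f p) = wirtinger (conj c) f p := by
  rw [← conj_conj (wirtinger (conj c) f p), ← wirtinger_conj]
  simp only [hf]

theorem fderiv_wirtinger (hf : DifferentiableAt ℝ (fderiv ℝ f) p) (v : ℝ × ℝ) :
    fderiv ℝ (wirtinger c f) p v
      = 2⁻¹ * (fderiv ℝ (fderiv ℝ f) p v (1, 0) + c * fderiv ℝ (fderiv ℝ f) p v (0, 1)) := by
  have hd : ∀ w : ℝ × ℝ, HasFDerivAt (fun x => fderiv ℝ f x w)
      ((fderiv ℝ (fderiv ℝ f) p).flip w) p := fun w => by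
    simpa using hf.hasFDerivAt.clm_apply (hasFDerivAt_const w p)
  have h : HasFDerivAt (wirtinger c f) _ p :=
    ((hd (1, 0)).add ((hd (0, 1)).const_mul c)).const_mul (2⁻¹ : ℂ)
  simp [h.fderiv, mul_add]

theorem wirtinger_comm {c' : ℂ} (hf : ContDiffAt ℝ 2 f p) :
    wirtinger c (wirtinger c' f) p = wirtinger c' (wirtinger c f) p := by
  have hsymm := hf.isSymmSndFDerivAt (by simp)
  have hd : DifferentiableAt ℝ (fderiv ℝ f) p :=
    (hf.fderiv_right (m := 1) le_rfl).differentiableAt one_ne_zero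
  simp only [wirtinger, fderiv_wirtinger hd, hsymm (1, 0) (0, 1)]
  ring

theorem ContDiff.wirtinger {n : WithTop ℕ∞} (hf : ContDiff ℝ (n + 1) f) :
    ContDiff ℝ n (wirtinger c f) := by
  have h := hf.fderiv_right le_rfl
  unfold _root_.wirtinger
  fun_prop

end Wirtinger

/-- `(1/2)(1 + iI)(a + bJ) = mkL (a/2) (b/2)`. -/
@[simps]
def mkL (a b : ℂ) : Quaternion ℂ := ⟨a, I * a, b, I * b⟩

section Quaternion
variable {a b a' b' w z : ℂ}

theorem eq_mkL_of_mem_Lset {q : Quaternion ℂ} (hq : q ∈ Lset) : q = mkL q.re q.imJ := by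
  obtain ⟨a, b, rfl⟩ := hq
  ext <;> simp <;> ring

theorem LnormSq_eq (q : Quaternion ℂ) : LnormSq q = 4 * (normSq q.re - normSq q.imJ) := by
  simp [LnormSq, normSq_mul]; ring

theorem mkL_add : mkL a b + mkL a' b' = mkL (a + a') (b + b') := by
  ext <;> simp only [Quaternion.re_add, Quaternion.imI_add, Quaternion.imJ_add,
    Quaternion.imK_add] <;> simp <;> ring

theorem mkL_sub : mkL a b - mkL a' b' = mkL (a - a') (b - b') := by
  ext <;> simp only [Quaternion.re_sub, Quaternion.imI_sub, Quaternion.imJ_sub,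
    Quaternion.imK_sub] <;> simp <;> ring

theorem smul_mkL (c : ℂ) : c • mkL a b = mkL (c * a) (c * b) := by
  ext <;> simp only [Quaternion.re_smul, Quaternion.imI_smul, Quaternion.imJ_smul,
    Quaternion.imK_smul] <;> simp <;> ring

theorem real_smul_mkL (r : ℝ) : r • mkL a b = mkL (r * a) (r * b) := by
  rw [← smul_mkL]; exact (algebraMap_smul ℂ r (mkL a b)).symm

theorem mkL_inj : mkL a b = mkL a' b' ↔ a = a' ∧ b = b' := by
  constructor
  · intro h; exact ⟨congrArg (·.re) h, congrArg (·.imJ) h⟩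
  · rintro ⟨rfl, rfl⟩; rfl

theorem Jq_mul_qhat_mkL_mul_Iq :
    Jq * qhat (mkL a b) * Iq = mkL (I * conj b) (I * conj a) := by
  ext <;> simp only [Quaternion.re_mul, Quaternion.imI_mul, Quaternion.imJ_mul,
    Quaternion.imK_mul] <;> simp [Jq, Iq, qhat] <;> ring_nf <;> simp

theorem rQ_eq_cI (r : ℝ) : rQ r = cI r := by
  ext <;> simp [rQ, cI]

theorem cI_zero : cI 0 = 0 := by
  ext <;> simp [cI, Quaternion.re_zero, Quaternion.imI_zero, Quaternion.imJ_zero,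
    Quaternion.imK_zero]

theorem cI_mul_mkL : cI w * mkL a b = mkL (conj w * a) (conj w * b) := by
  ext <;> simp only [Quaternion.re_mul, Quaternion.imI_mul, Quaternion.imJ_mul,
    Quaternion.imK_mul] <;> simp [cI, Complex.ext_iff] <;> ring

theorem cI_mul_cI : cI w * cI z = cI (w * z) := by
  ext <;> simp only [Quaternion.re_mul, Quaternion.imI_mul, Quaternion.imJ_mul,
    Quaternion.imK_mul] <;> simp [cI]

theorem cI_add : cI (w + z) = cI w + cI z := by
  ext <;> simp only [Quaternion.re_add, Quaternion.imI_add, Quaternion.imJ_add,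
    Quaternion.imK_add] <;> simp [cI]

theorem cI_sub : cI (w - z) = cI w - cI z := by
  ext <;> simp only [Quaternion.re_sub, Quaternion.imI_sub, Quaternion.imJ_sub,
    Quaternion.imK_sub] <;> simp [cI]

theorem inv_two_smul_cI : (2 : ℂ)⁻¹ • cI w = cI (2⁻¹ * w) := by
  ext <;> simp only [Quaternion.re_smul, Quaternion.imI_smul, Quaternion.imJ_smul,
    Quaternion.imK_smul] <;> simp [cI]

theorem Iq_eq_cI : Iq = cI I := by
  ext <;> simp [Iq, cI]

end Quaternion

section QuaternionDerivatives
variable {A B w : ℝ × ℝ → ℂ} {p : ℝ × ℝ}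

theorem qpd_mkL (hA : DifferentiableAt ℝ A p) (hB : DifferentiableAt ℝ B p) (v : ℝ × ℝ) :
    qpd v (fun s => mkL (A s) (B s)) p = mkL (fderiv ℝ A p v) (fderiv ℝ B p v) := by
  ext <;> simp [qpd, fderiv_const_mul hA, fderiv_const_mul hB]

theorem qdz_mkL (hA : DifferentiableAt ℝ A p) (hB : DifferentiableAt ℝ B p) :
    qdz (fun s => mkL (A s) (B s)) p = mkL (wirtinger I A p) (wirtinger I B p) := by
  rw [qdz, qpd_mkL hA hB, qpd_mkL hA hB, Iq_eq_cI, cI_mul_mkL, mkL_sub, smul_mkL, conj_I]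
  simp [wirtinger, sub_eq_add_neg]

theorem qdzbar_mkL (hA : DifferentiableAt ℝ A p) (hB : DifferentiableAt ℝ B p) :
    qdzbar (fun s => mkL (A s) (B s)) p = mkL (wirtinger (-I) A p) (wirtinger (-I) B p) := by
  rw [qdzbar, qpd_mkL hA hB, qpd_mkL hA hB, Iq_eq_cI, cI_mul_mkL, mkL_add, smul_mkL, conj_I]
  rfl

theorem qpd_cI (hw : DifferentiableAt ℝ w p) (v : ℝ × ℝ) :
    qpd v (fun s => cI (w s)) p = cI (fderiv ℝ w p v) := by
  have hre : fderiv ℝ (fun s => ((w s).re : ℂ)) p v = ((fderiv ℝ w p v).re : ℂ) := by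
    change fderiv ℝ ((ofRealCLM.comp reCLM) ∘ w) p v = _
    rw [((ofRealCLM.comp reCLM).hasFDerivAt.comp p hw.hasFDerivAt).fderiv]; rfl
  have him : fderiv ℝ (fun s => ((w s).im : ℂ)) p v = ((fderiv ℝ w p v).im : ℂ) := by
    change fderiv ℝ ((ofRealCLM.comp imCLM) ∘ w) p v = _
    rw [((ofRealCLM.comp imCLM).hasFDerivAt.comp p hw.hasFDerivAt).fderiv]; rfl
  ext <;> simp [qpd, cI, hre, him]

theorem qdz_cI (hw : DifferentiableAt ℝ w p) :
    qdz (fun s => cI (w s)) p = cI (wirtinger (-I) w p) := by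
  rw [qdz, qpd_cI hw, qpd_cI hw, Iq_eq_cI, cI_mul_cI, ← cI_sub, inv_two_smul_cI]
  simp [wirtinger, sub_eq_add_neg]

theorem qdzbar_cI (hw : DifferentiableAt ℝ w p) :
    qdzbar (fun s => cI (w s)) p = cI (wirtinger I w p) := by
  rw [qdzbar, qpd_cI hw, qpd_cI hw, Iq_eq_cI, cI_mul_cI, ← cI_add, inv_two_smul_cI]
  rfl

theorem qdz_qdzbar_rQ {f : ℝ × ℝ → ℝ} (hf : ContDiff ℝ 2 f) :
    qdz (fun s => qdzbar (fun r => rQ (f r)) s) p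
      = cI (wirtinger (-I) (wirtinger I fun s => (f s : ℂ)) p) := by
  have hfC : ContDiff ℝ 2 fun s => (f s : ℂ) := ofRealCLM.contDiff.comp hf
  have hd : Differentiable ℝ (wirtinger I fun s => (f s : ℂ)) :=
    (ContDiff.wirtinger (n := 1) hfC).differentiable one_ne_zero
  simp only [rQ_eq_cI, qdzbar_cI (hfC.differentiable two_ne_zero _), qdz_cI (hd p)]

end QuaternionDerivatives

/-- The `re`-coordinate of the g-system for `g = mkL A B` and `u = log √τ₀`; its
`imJ`-coordinate is the same statement with `A` and `B` swapped. -/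
def CoordGSystem (u Q A B : ℝ × ℝ → ℂ) : Prop :=
  ∀ p, wirtinger I A p = wirtinger I u p * A p + I * exp (-u p) * conj (Q p) * conj (B p) ∧
    wirtinger (-I) A p = I / 4 * exp (u p) * conj (B p)

theorem CoordGSystem.integrability {u Q A B : ℝ × ℝ → ℂ} (hu : ContDiff ℝ 2 u)
    (hu_real : ∀ p, conj (u p) = u p) (hQ : Differentiable ℝ Q) (hA : ContDiff ℝ 2 A)
    (hB : Differentiable ℝ B) (hAB : CoordGSystem u Q A B) (hBA : CoordGSystem u Q B A)
    (p : ℝ × ℝ) :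
    (wirtinger (-I) (wirtinger I u) p + exp (-u p) ^ 2 * (Q p * conj (Q p))
        - exp (u p) ^ 2 / 16) * A p + I * exp (-u p) * conj (wirtinger I Q p) * conj (B p) = 0 := by
  have hu1 : Differentiable ℝ u := hu.differentiable two_ne_zero
  have hdu : Differentiable ℝ (wirtinger I u) :=
    (ContDiff.wirtinger (n := 1) hu).differentiable one_ne_zero
  have hA1 : Differentiable ℝ A := hA.differentiable two_ne_zero
  have comm := wirtinger_comm (c := -I) (c' := I) (hA.contDiffAt (x := p))
  rw [show wirtinger I A = _ from funext fun x => (hAB x).1,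
    show wirtinger (-I) A = _ from funext fun x => (hAB x).2] at comm
  simp (disch := fun_prop) only [wirtinger_add, wirtinger_mul, wirtinger_cexp, wirtinger_neg,
    wirtinger_const, wirtinger_conj] at comm
  simp only [(hAB p).2, (hBA p).1, (hBA p).2, map_mul, map_add, map_neg, map_div₀, map_ofNat,
    neg_neg, conj_wirtinger_of_forall_conj_eq hu_real, conj_conj, conj_I, ← exp_conj,
    hu_real] at comm
  linear_combination comm
    + (exp (-u p) ^ 2 * Q p * conj (Q p) - exp (u p) ^ 2 / 16) * A p * I_sq

theorem CoordGSystem.compatibility {u Q A B : ℝ × ℝ → ℂ} (hu : ContDiff ℝ 2 u)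
    (hu_real : ∀ p, conj (u p) = u p) (hQ : Differentiable ℝ Q) (hA : ContDiff ℝ 2 A)
    (hB : ContDiff ℝ 2 B) (hAB : CoordGSystem u Q A B) (hBA : CoordGSystem u Q B A)
    (hne : ∀ p, normSq (A p) ≠ normSq (B p)) (p : ℝ × ℝ) :
    wirtinger I Q p = 0 ∧
      wirtinger (-I) (wirtinger I u) p = exp (u p) ^ 2 / 16 - exp (-u p) ^ 2 * normSq (Q p) := by
  obtain ⟨ha, hc⟩ := eq_zero_of_mul_add_mul_conj
    (hAB.integrability hu hu_real hQ hA (hB.differentiable two_ne_zero) hBA p)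
    (hBA.integrability hu hu_real hQ hB (hA.differentiable two_ne_zero) hAB p) (hne p)
  refine ⟨by simpa [I_ne_zero, exp_ne_zero] using hc, ?_⟩
  rw [← mul_conj]
  linear_combination ha

theorem cexp_ofReal_log_sqrt {t : ℝ} (ht : 0 < t) : exp (Real.log √t : ℂ) = √t := by
  rw [← ofReal_exp, Real.exp_log (Real.sqrt_pos.2 ht)]

theorem GSystem.coordGSystem {τ : ℝ × ℝ → ℝ} {Q A B : ℝ × ℝ → ℂ} (hτ : ∀ p, 0 < τ p)
    (hu : Differentiable ℝ fun s => (Real.log √(τ s) : ℂ)) (hA : Differentiable ℝ A)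
    (hB : Differentiable ℝ B) (h : GSystem τ Q fun s => mkL (A s) (B s)) :
    CoordGSystem (fun s => (Real.log √(τ s) : ℂ)) Q A B ∧
      CoordGSystem (fun s => (Real.log √(τ s) : ℂ)) Q B A := by
  have hreal : ∀ x, conj ((Real.log √(τ x) : ℂ)) = Real.log √(τ x) := fun x => conj_ofReal _
  simp only [GSystem, qdz_mkL hA.differentiableAt hB.differentiableAt,
    qdzbar_mkL hA.differentiableAt hB.differentiableAt, rQ_eq_cI, qdz_cI hu.differentiableAt,
    Jq_mul_qhat_mkL_mul_Iq, cI_mul_mkL, real_smul_mkL, mkL_add, mkL_inj,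
    conj_wirtinger_of_forall_conj_eq hreal, map_neg, conj_I, neg_neg] at h
  refine ⟨fun p => ?_, fun p => ?_⟩ <;> obtain ⟨⟨h1, h2⟩, h3, h4⟩ := h p <;>
    simp only [exp_neg, cexp_ofReal_log_sqrt (hτ p)] <;> push_cast at *
  · exact ⟨by rw [h1]; ring, by rw [h3]; ring⟩
  · exact ⟨by rw [h2]; ring, by rw [h4]; ring⟩

/-- If `g : ℝ² → L` is smooth with `|g|²` nowhere vanishing and satisfies
the `g`-system for smooth data `τ₀ : ℝ² → (0,∞)`, `Q₀ : ℝ² → ℂ_I`, then `∂_z̄ Q₀ = 0`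
(`Q₀` is `I`-holomorphic) and `∂_z(∂_z̄(log √τ₀)) = −|Q₀|²/τ₀ + τ₀/16`. -/
theorem stmt10 (τ₀ : ℝ × ℝ → ℝ) (Q₀ : ℝ × ℝ → ℂ)
    (hτ : ContDiff ℝ (⊤ : ℕ∞) τ₀) (hτpos : ∀ p, 0 < τ₀ p)
    (hQ : ContDiff ℝ (⊤ : ℕ∞) Q₀)
    (g : ℝ × ℝ → Quaternion ℂ) (hgs : QSmooth g) (hgL : ∀ p, g p ∈ Lset)
    (hgnz : ∀ p, LnormSq (g p) ≠ 0) (hsys : GSystem τ₀ Q₀ g) :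
    (∀ p, qdzbar (fun s => cI (Q₀ s)) p = 0) ∧
    (∀ p, qdz (fun s => qdzbar (fun r => rQ (Real.log (Real.sqrt (τ₀ r)))) s) p
        = rQ (-(Complex.normSq (Q₀ p)) / τ₀ p + τ₀ p / 16)) := by
  obtain ⟨hA, -, hB, -⟩ := hgs
  have hg : g = fun s => mkL (g s).re (g s).imJ := funext fun s => eq_mkL_of_mem_Lset (hgL s)
  have hlog : ContDiff ℝ (⊤ : ℕ∞) fun s => Real.log √(τ₀ s) :=
    (hτ.sqrt fun s => (hτpos s).ne').log fun s => (Real.sqrt_pos.2 (hτpos s)).ne'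
  have hu : ContDiff ℝ (⊤ : ℕ∞) fun s => (Real.log √(τ₀ s) : ℂ) :=
    ofRealCLM.contDiff.comp hlog
  rw [hg] at hsys
  obtain ⟨hAB, hBA⟩ := hsys.coordGSystem hτpos (hu.differentiable (by simp))
    (hA.differentiable (by simp)) (hB.differentiable (by simp))
  have hne : ∀ p, normSq (g p).re ≠ normSq (g p).imJ := fun p h =>
    hgnz p (by rw [LnormSq_eq, h, sub_self, mul_zero])
  have key := hAB.compatibility (contDiff_infty.1 hu 2) (fun s => conj_ofReal _)
    (hQ.differentiable (by simp)) (contDiff_infty.1 hA 2) (contDiff_infty.1 hB 2) hBA hne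
  refine ⟨fun p => ?_, fun p => ?_⟩
  · rw [qdzbar_cI (hQ.differentiable (by simp) p), (key p).1, cI_zero]
  · rw [qdz_qdzbar_rQ (contDiff_infty.1 hlog 2), (key p).2, rQ_eq_cI]
    simp only [exp_neg, cexp_ofReal_log_sqrt (hτpos p), inv_pow, ← ofReal_pow,
      Real.sq_sqrt (hτpos p).le]
    push_cast
    congr 1
    ring
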